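/- arXiv:1702.05656 — 2 statements merged into one kernel-verified Lean document; each statement's English description precedes it below -/
import Mathlib

section
/- Let σ, β > 0, ε > 0, and let c ∈ ℝ³ with c ≠ 0 and |c| ≤ 1. For N(k) = ε(σ|k|² + β i c·k) and 3/2 ≤ q < 2, there exist a constant C (depending on σ, β, q) and ϱ > 0 such that (∫_{|k| ≤ 2} |N(k)|^{-q} dk)^{1/q} ≤ C ε^{-1} |c|^{-1+ϱ}. -/
open MeasureTheory Real RealInnerProductSpace
open Set Metric

/-! By AM–GM, `|N(k)|² ≥ ε²σβ |k|² |c·k|`, so `|N(k)|^{-q} ≤ (ε²σβ)^{-q/2} (|k|² |c·k|)^{-q/2}`.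
A rotation taking `c / |c|` to the first coordinate axis pulls out the factor `|c|^{-q/2}`, and
the remaining integral is finite for `q < 2` since `|k|² |k₀| ≥ |k₀| |k₁| |k₂|` dominates its
integrand by a product of the one-dimensional integrable functions `|t|^{-q/2}`. Taking `q`-th
roots gives the estimate with `ϱ = 1/2`. -/

theorem ae_inner_ne_zero {E : Type*} [NormedAddCommGroup E] [InnerProductSpace ℝ E]
    [FiniteDimensional ℝ E] [MeasurableSpace E] [BorelSpace E] (μ : Measure E)
    [μ.IsAddHaarMeasure] {w : E} (hw : w ≠ 0) : ∀ᵐ k ∂μ, ⟪w, k⟫ ≠ 0 := by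
  have hker : {k : E | ¬⟪w, k⟫ ≠ 0} = ((ℝ ∙ w)ᗮ : Submodule ℝ E) := by
    ext k
    simp [Submodule.mem_orthogonal_singleton_iff_inner_right]
  rw [ae_iff, hker]
  refine Measure.addHaar_submodule μ _ fun htop => hw ?_
  rwa [Submodule.orthogonal_eq_top_iff, Submodule.span_singleton_eq_bot] at htop

theorem intervalIntegrable_abs_rpow {r : ℝ} (hr : -1 < r) (a b : ℝ) :
    IntervalIntegrable (fun t : ℝ => |t| ^ r) volume a b := by
  have hnonneg : ∀ c, 0 ≤ c → IntervalIntegrable (fun t : ℝ => |t| ^ r) volume 0 c := by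
    intro c hc
    refine (intervalIntegral.intervalIntegrable_rpow' hr).congr ?_
    intro t ht
    rw [uIoc_of_le hc] at ht
    simp [abs_of_pos ht.1]
  have hzero : ∀ c, IntervalIntegrable (fun t : ℝ => |t| ^ r) volume 0 c := by
    intro c
    rcases le_total 0 c with hc | hc
    · exact hnonneg c hc
    · simpa [abs_neg] using (IntervalIntegrable.iff_comp_neg (by simp)).mp
        (hnonneg (-c) (by linarith))
  exact (hzero a).symm.trans (hzero b)

theorem EuclideanSpace.integrable_prod_apply {ι : Type*} [Fintype ι] {f : ι → ℝ → ℝ}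
    (hf : ∀ i, Integrable (f i)) :
    Integrable (fun x : EuclideanSpace ℝ ι => ∏ i, f i (x i)) :=
  ((EuclideanSpace.volume_preserving_symm_measurableEquiv_toLp ι).integrable_comp_emb
    (MeasurableEquiv.measurableEmbedding _)).mpr (Integrable.fintype_prod hf)

theorem EuclideanSpace.exists_linearIsometryEquiv_inner_apply {ι : Type*} [Fintype ι]
    (c : EuclideanSpace ℝ ι) (i : ι) :
    ∃ S : EuclideanSpace ℝ ι ≃ₗᵢ[ℝ] EuclideanSpace ℝ ι, ∀ x, ⟪c, S x⟫ = ‖c‖ * x i := by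
  rcases eq_or_ne c 0 with rfl | hc
  · exact ⟨LinearIsometryEquiv.refl ℝ _, by simp⟩
  have hunit : Orthonormal ℝ (({i} : Set ι).domRestrict fun _ => ‖c‖⁻¹ • c) :=
    ⟨fun _ => norm_smul_inv_norm hc, fun j k hjk => absurd (Subsingleton.elim j k) hjk⟩
  obtain ⟨b, hb⟩ := hunit.exists_orthonormalBasis_extension_of_card_eq (by simp)
  refine ⟨b.repr.symm, fun x => ?_⟩
  have hc' : c = ‖c‖ • b i := by
    rw [hb i rfl, smul_smul, mul_inv_cancel₀ (norm_ne_zero_iff.mpr hc), one_smul]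
  conv_lhs => rw [hc']
  rw [real_inner_smul_left, ← OrthonormalBasis.repr_apply_apply,
    LinearIsometryEquiv.apply_symm_apply]

namespace LinearIsometryEquiv

variable {E : Type*} [NormedAddCommGroup E] [InnerProductSpace ℝ E] [FiniteDimensional ℝ E]
  [MeasurableSpace E] [BorelSpace E] (S : E ≃ₗᵢ[ℝ] E) (R : ℝ)

theorem integrableOn_closedBall_comp_iff {f : E → ℝ} :
    IntegrableOn (f ∘ S) (closedBall 0 R) ↔ IntegrableOn f (closedBall 0 R) := by
  simpa using S.measurePreserving.integrableOn_comp_preimage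
    S.toHomeomorph.measurableEmbedding (f := f) (s := closedBall 0 R)

theorem setIntegral_closedBall_comp (f : E → ℝ) :
    ∫ x in closedBall 0 R, f (S x) = ∫ x in closedBall 0 R, f x := by
  simpa using S.measurePreserving.setIntegral_preimage_emb
    S.toHomeomorph.measurableEmbedding f (closedBall 0 R)

end LinearIsometryEquiv

theorem EuclideanSpace.prod_abs_le_sq_norm_mul_abs (x : EuclideanSpace ℝ (Fin 3)) :
    ∏ i, |x i| ≤ ‖x‖ ^ 2 * |x 0| := by
  have hnorm : ‖x‖ ^ 2 = x 0 ^ 2 + x 1 ^ 2 + x 2 ^ 2 := by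
    rw [EuclideanSpace.real_norm_sq_eq, Fin.sum_univ_three]
  have hmid : |x 1| * |x 2| ≤ ‖x‖ ^ 2 := by
    nlinarith [sq_abs (x 1), sq_abs (x 2), sq_nonneg (|x 1| - |x 2|), sq_nonneg (x 0)]
  rw [Fin.prod_univ_three, mul_assoc, mul_comm]
  exact mul_le_mul_of_nonneg_right hmid (abs_nonneg _)

theorem integrableOn_closedBall_sq_norm_mul_abs_rpow {p : ℝ} (hp : -1 < p) (hp0 : p ≤ 0)
    (R : ℝ) :
    IntegrableOn (fun x : EuclideanSpace ℝ (Fin 3) => (‖x‖ ^ 2 * |x 0|) ^ p)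
      (closedBall 0 R) := by
  set φ : ℝ → ℝ := (Icc (-R) R).indicator fun t => |t| ^ p
  have hφ : Integrable φ := by
    rw [integrable_indicator_iff measurableSet_Icc]
    exact ((intervalIntegrable_iff').mp (intervalIntegrable_abs_rpow hp (-R) R)).mono_set
      Icc_subset_uIcc
  have hcoord : ∀ᵐ x : EuclideanSpace ℝ (Fin 3), ∀ i, x i ≠ 0 :=
    ae_all_iff.mpr fun i => by
      simpa [EuclideanSpace.inner_single_left] using
        ae_inner_ne_zero volume (w := EuclideanSpace.single i (1 : ℝ)) (by simp)
  refine (EuclideanSpace.integrable_prod_apply fun _ => hφ).integrableOn.mono'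
    (Measurable.aestronglyMeasurable (by fun_prop)) ?_
  filter_upwards [ae_restrict_mem measurableSet_closedBall, ae_restrict_of_ae hcoord]
    with x hx hne
  have hIcc : ∀ i, x i ∈ Icc (-R) R := fun i =>
    abs_le.mp ((PiLp.norm_apply_le x i).trans (mem_closedBall_zero_iff.mp hx))
  have hprod : 0 < ∏ i, |x i| := Finset.prod_pos fun i _ => abs_pos.mpr (hne i)
  calc ‖(‖x‖ ^ 2 * |x 0|) ^ p‖ = (‖x‖ ^ 2 * |x 0|) ^ p :=
        Real.norm_of_nonneg (by positivity)
    _ ≤ (∏ i, |x i|) ^ p :=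
        rpow_le_rpow_of_nonpos hprod (EuclideanSpace.prod_abs_le_sq_norm_mul_abs x) hp0
    _ = ∏ i, φ (x i) := by
        rw [← Real.finsetProd_rpow _ _ fun i _ => abs_nonneg _]
        exact Finset.prod_congr rfl fun i _ => (indicator_of_mem (hIcc i) (fun t => |t| ^ p)).symm

section Rotation

variable {ι : Type*} [Fintype ι] (c : EuclideanSpace ℝ ι) (i : ι)

theorem rpow_sq_norm_mul_abs_inner_comp {S : EuclideanSpace ℝ ι ≃ₗᵢ[ℝ] EuclideanSpace ℝ ι}
    (hS : ∀ x, ⟪c, S x⟫ = ‖c‖ * x i) (p : ℝ) :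
    (fun k => (‖k‖ ^ 2 * |⟪c, k⟫|) ^ p) ∘ S = fun x => ‖c‖ ^ p * (‖x‖ ^ 2 * |x i|) ^ p := by
  funext x
  rw [Function.comp_apply, hS, S.norm_map, abs_mul, abs_norm, mul_left_comm,
    mul_rpow (norm_nonneg c) (by positivity)]

theorem integrableOn_closedBall_sq_norm_mul_abs_inner_rpow {p R : ℝ}
    (h : IntegrableOn (fun x : EuclideanSpace ℝ ι => (‖x‖ ^ 2 * |x i|) ^ p) (closedBall 0 R)) :
    IntegrableOn (fun k => (‖k‖ ^ 2 * |⟪c, k⟫|) ^ p) (closedBall 0 R) := by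
  obtain ⟨S, hS⟩ := EuclideanSpace.exists_linearIsometryEquiv_inner_apply c i
  rw [← S.integrableOn_closedBall_comp_iff, rpow_sq_norm_mul_abs_inner_comp c i hS]
  exact h.const_mul _

theorem setIntegral_closedBall_sq_norm_mul_abs_inner_rpow (p R : ℝ) :
    ∫ k in closedBall 0 R, (‖k‖ ^ 2 * |⟪c, k⟫|) ^ p
      = ‖c‖ ^ p * ∫ x in closedBall (0 : EuclideanSpace ℝ ι) R, (‖x‖ ^ 2 * |x i|) ^ p := by
  obtain ⟨S, hS⟩ := EuclideanSpace.exists_linearIsometryEquiv_inner_apply c i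
  rw [← S.setIntegral_closedBall_comp, ← integral_const_mul]
  exact congrArg (fun f => ∫ x in closedBall 0 R, f x) (rpow_sq_norm_mul_abs_inner_comp c i hS p)

end Rotation

theorem Complex.norm_add_mul_I_rpow_neg_le {a b q : ℝ} (hq : 0 ≤ q) (ha : a ≠ 0) (hb : b ≠ 0) :
    ‖(a : ℂ) + b * Complex.I‖ ^ (-q) ≤ (|a| * |b|) ^ (-(q / 2)) := by
  have hsq : ‖(a : ℂ) + b * Complex.I‖ ^ (-q) = (a ^ 2 + b ^ 2) ^ (-(q / 2)) := by
    rw [Complex.norm_add_mul_I, sqrt_eq_rpow, ← rpow_mul (by positivity)]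
    ring_nf
  rw [hsq]
  refine rpow_le_rpow_of_nonpos (by positivity) ?_ (by linarith)
  nlinarith [sq_abs a, sq_abs b, sq_nonneg (|a| - |b|)]

theorem setIntegral_closedBall_multiplier_rpow_neg_le {σ β ε q : ℝ} (hσ : 0 < σ) (hβ : 0 < β)
    (hε : 0 < ε) (hq0 : 0 < q) (hq2 : q < 2) {c : EuclideanSpace ℝ (Fin 3)} (hc : c ≠ 0)
    (R : ℝ) :
    ∫ k in closedBall 0 R,
        ‖((ε * (σ * ‖k‖ ^ 2) : ℝ) : ℂ) + ((ε * (β * ⟪c, k⟫) : ℝ) : ℂ) * Complex.I‖ ^ (-q)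
      ≤ (ε ^ 2 * (σ * β)) ^ (-(q / 2)) * (‖c‖ ^ (-(q / 2)) *
          ∫ x in closedBall (0 : EuclideanSpace ℝ (Fin 3)) R, (‖x‖ ^ 2 * |x 0|) ^ (-(q / 2))) := by
  have hp : -1 < -(q / 2) := by linarith
  have hp0 : -(q / 2) ≤ 0 := by linarith
  rw [← setIntegral_closedBall_sq_norm_mul_abs_inner_rpow c 0, ← integral_const_mul]
  refine integral_mono_of_nonneg (.of_forall fun k => by positivity)
    ((integrableOn_closedBall_sq_norm_mul_abs_inner_rpow c 0
      (integrableOn_closedBall_sq_norm_mul_abs_rpow hp hp0 R)).const_mul _)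
    (ae_restrict_of_ae ?_)
  filter_upwards [ae_inner_ne_zero volume hc] with k hck
  have hk : k ≠ 0 := by
    rintro rfl
    exact hck (inner_zero_right c)
  have habs : |ε * (σ * ‖k‖ ^ 2)| * |ε * (β * ⟪c, k⟫)|
      = ε ^ 2 * (σ * β) * (‖k‖ ^ 2 * |⟪c, k⟫|) := by
    rw [abs_of_pos (by positivity), abs_mul, abs_mul, abs_of_pos hε, abs_of_pos hβ]
    ring
  calc _ ≤ (|ε * (σ * ‖k‖ ^ 2)| * |ε * (β * ⟪c, k⟫)|) ^ (-(q / 2)) :=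
        Complex.norm_add_mul_I_rpow_neg_le hq0.le (by positivity) (by positivity)
    _ = _ := by rw [habs, mul_rpow (by positivity) (by positivity)]

/-- Anisotropic multiplier estimate: for `N(k) = ε(σ|k|² + iβ c·k)` and
`3/2 ≤ q < 2`, there are `C` (depending on σ, β, q) and `ϱ > 0` with
`(∫_{|k|≤2} |N(k)|^{-q})^{1/q} ≤ C ε⁻¹ |c|^{-1+ϱ}`. -/
theorem multiplier_estimate_small_c (σ β q : ℝ)
    (hσ : 0 < σ) (hβ : 0 < β) (hq1 : 3/2 ≤ q) (hq2 : q < 2) :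
    ∃ C > (0:ℝ), ∃ ϱ > (0:ℝ), ∀ (ε : ℝ), 0 < ε → ε ≤ 1 →
      ∀ c : EuclideanSpace ℝ (Fin 3), c ≠ 0 → ‖c‖ ≤ 1 →
      (∫ k in Metric.closedBall (0 : EuclideanSpace ℝ (Fin 3)) 2,
          ‖((ε * (σ * ‖k‖^2) : ℝ) : ℂ)
            + ((ε * (β * ⟪c, k⟫) : ℝ) : ℂ) * Complex.I‖ ^ (-q)) ^ (1/q)
        ≤ C * ε⁻¹ * ‖c‖ ^ (-1 + ϱ) := by
  have hq0 : 0 < q := by linarith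
  set J := ∫ x in closedBall (0 : EuclideanSpace ℝ (Fin 3)) 2, (‖x‖ ^ 2 * |x 0|) ^ (-(q / 2))
  have hJ : 0 ≤ J := setIntegral_nonneg measurableSet_closedBall fun x _ => by positivity
  have hroot : ∀ x : ℝ, 0 ≤ x → (x ^ (-(q / 2))) ^ (1 / q) = x ^ (-(1 / 2) : ℝ) := fun x hx => by
    rw [← rpow_mul hx]
    congr 1
    field_simp
  refine ⟨(σ * β) ^ (-(1 / 2) : ℝ) * (J + 1) ^ (1 / q), by positivity, 1 / 2, by norm_num,
    fun ε hε _ c hc _ => ?_⟩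
  have hε2 : (ε ^ 2) ^ (-(1 / 2) : ℝ) = ε⁻¹ := by
    rw [← rpow_natCast, ← rpow_mul hε.le]
    norm_num [rpow_neg_one]
  calc _ ≤ ((ε ^ 2 * (σ * β)) ^ (-(q / 2)) * (‖c‖ ^ (-(q / 2)) * (J + 1))) ^ (1 / q) := by
        refine rpow_le_rpow (setIntegral_nonneg measurableSet_closedBall fun k _ => by positivity)
          ((setIntegral_closedBall_multiplier_rpow_neg_le hσ hβ hε hq0 hq2 hc 2).trans ?_)
          (by positivity)
        gcongr
        linarith
    _ = _ := by
        rw [mul_rpow (by positivity) (by positivity), hroot _ (by positivity),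
          mul_rpow (rpow_nonneg (norm_nonneg c) _) (by linarith), hroot _ (norm_nonneg c),
          mul_rpow (sq_nonneg ε) (by positivity), hε2]
        norm_num
        ring
end

section
/- Suppose w : ℝ³ → ℝ satisfies w(v)^{-1} ≤ μ_c(v)^{β/2} ⟨v⟩^{-β'} with β > 0, β' > 2, where μ_c(v) = (2π)^{-3/2}exp(-|v−εc|²/2) and ⟨v⟩ = (1+|v|²)^{1/2}. Then for any α > 0 and any unit vector n, ∫_{ℝ³} w(v)^{-2} 𝟙_{{√μ_c(v) < α·w(v)^{-1}}} μ_c(v) |v·n| dv ≤ C α^{2+2β} for a constant C depending only on β, β' (and uniformly for ε|c| ≤ 1). -/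
open MeasureTheory Real RealInnerProductSpace

noncomputable def gauss (v : EuclideanSpace ℝ (Fin 3)) : ℝ :=
  (2 * Real.pi) ^ (-(3:ℝ)/2) * Real.exp (-‖v‖^2 / 2)

noncomputable def gaussC (ε : ℝ) (c v : EuclideanSpace ℝ (Fin 3)) : ℝ :=
  gauss (v - ε • c)

/-! On the small set, `√μ < α w⁻¹ ≤ α` forces `μ^{1+β} ≤ α^{2+2β}`, while the hypothesis on `w`
gives `w⁻² ≤ μ^β ⟨v⟩^{-2β'}`. Hence the integrand is at most `α^{2+2β} ⟨v⟩^{-2β'} |v·n|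
≤ α^{2+2β} ⟨v⟩^{1-2β'}`, which is integrable on `ℝ³` because `2β' - 1 > 3`. The Gaussian
enters only through `0 < μ_c ≤ 1`, so the constant is uniform in `ε` and `c`. -/

lemma gauss_pos (v : EuclideanSpace ℝ (Fin 3)) : 0 < gauss v := by
  unfold gauss
  positivity

lemma gauss_le_one (v : EuclideanSpace ℝ (Fin 3)) : gauss v ≤ 1 := by
  refine mul_le_one₀ ?_ (exp_nonneg _) (exp_le_one_iff.2 ?_)
  · exact rpow_le_one_of_one_le_of_nonpos (by nlinarith [pi_gt_three]) (by norm_num)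
  · nlinarith [sq_nonneg ‖v‖]

lemma sq_mul_le_of_sqrt_lt_mul {m s x α β : ℝ} (hm : 0 < m) (hm1 : m ≤ 1) (hs : 0 ≤ s)
    (hs1 : s ≤ 1) (hβ : 0 ≤ β) (hα : 0 ≤ α) (hx : x ≤ m ^ (β / 2) * s)
    (hsmall : √m < α * x) :
    x ^ 2 * m ≤ α ^ (2 + 2 * β) * s ^ 2 := by
  have hx0 : 0 < x := pos_of_mul_pos_right ((sqrt_pos.2 hm).trans hsmall) hα
  have hx1 : x ≤ 1 := hx.trans (mul_le_one₀ (rpow_le_one hm.le hm1 (by positivity)) hs hs1)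
  have hsqrt : √m ≤ α := hsmall.le.trans (mul_le_of_le_one_right hα hx1)
  have hpow : m ^ (1 + β) ≤ α ^ (2 + 2 * β) :=
    calc m ^ (1 + β) = √m ^ (2 + 2 * β) := by
          rw [sqrt_eq_rpow, ← rpow_mul hm.le]; ring_nf
      _ ≤ α ^ (2 + 2 * β) := rpow_le_rpow (sqrt_nonneg _) hsqrt (by positivity)
  have hxsq : x ^ 2 ≤ m ^ β * s ^ 2 :=
    calc x ^ 2 ≤ (m ^ (β / 2) * s) ^ 2 := pow_le_pow_left₀ hx0.le hx 2
      _ = m ^ β * s ^ 2 := by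
          rw [mul_pow, ← rpow_natCast, ← rpow_mul hm.le]; norm_num
  calc x ^ 2 * m ≤ m ^ β * s ^ 2 * m := by gcongr
    _ = m ^ (1 + β) * s ^ 2 := by rw [rpow_add hm, rpow_one]; ring
    _ ≤ α ^ (2 + 2 * β) * s ^ 2 := by gcongr

section InnerProductSpace

variable {E : Type*} [NormedAddCommGroup E] [InnerProductSpace ℝ E]

lemma abs_inner_le_sqrt_one_add_norm_sq {v n : E} (hn : ‖n‖ = 1) :
    |⟪v, n⟫| ≤ √(1 + ‖v‖ ^ 2) :=
  calc |⟪v, n⟫| ≤ ‖v‖ := by simpa [hn] using abs_real_inner_le_norm v n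
    _ = √(‖v‖ ^ 2) := (sqrt_sq (norm_nonneg v)).symm
    _ ≤ √(1 + ‖v‖ ^ 2) := sqrt_le_sqrt (by linarith)

lemma small_set_integrand_le {m x α β β' : ℝ} {v n : E} (hm : 0 < m) (hm1 : m ≤ 1)
    (hβ : 0 ≤ β) (hβ' : 0 ≤ β') (hα : 0 ≤ α) (hn : ‖n‖ = 1)
    (hx : x ≤ m ^ (β / 2) * (1 + ‖v‖ ^ 2) ^ (-β' / 2)) :
    x ^ 2 * (if √m < α * x then (1:ℝ) else 0) * m * |⟪v, n⟫|
      ≤ α ^ (2 + 2 * β) * (1 + ‖v‖ ^ 2) ^ (-(2 * β' - 1) / 2) := by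
  set t : ℝ := 1 + ‖v‖ ^ 2
  have ht : 1 ≤ t := le_add_of_nonneg_right (by positivity)
  have ht0 : 0 < t := by positivity
  split_ifs with hsmall
  · have hs1 : t ^ (-β' / 2) ≤ 1 := rpow_le_one_of_one_le_of_nonpos ht (by linarith)
    have hsq : (t ^ (-β' / 2)) ^ 2 = t ^ (-β') := by
      rw [← rpow_natCast, ← rpow_mul ht0.le]; ring_nf
    calc x ^ 2 * 1 * m * |⟪v, n⟫| ≤ α ^ (2 + 2 * β) * t ^ (-β') * t ^ (1 / 2 : ℝ) := by
          rw [mul_one, ← hsq, ← sqrt_eq_rpow]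
          exact mul_le_mul (sq_mul_le_of_sqrt_lt_mul hm hm1 (by positivity) hs1 hβ hα hx hsmall)
            (abs_inner_le_sqrt_one_add_norm_sq hn) (abs_nonneg _) (by positivity)
      _ = α ^ (2 + 2 * β) * t ^ (-(2 * β' - 1) / 2) := by
          rw [mul_assoc, ← rpow_add ht0]; ring_nf
  · simp only [mul_zero, zero_mul]
    positivity

lemma integral_small_set_le [FiniteDimensional ℝ E] [MeasurableSpace E] [BorelSpace E]
    (μ : Measure E) [μ.IsAddHaarMeasure] {β β' α : ℝ} {m w : E → ℝ} {n : E}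
    (hdim : (Module.finrank ℝ E : ℝ) < 2 * β' - 1) (hβ : 0 ≤ β) (hα : 0 ≤ α) (hn : ‖n‖ = 1)
    (hm : ∀ v, 0 < m v) (hm1 : ∀ v, m v ≤ 1)
    (hw : ∀ v, (w v)⁻¹ ≤ m v ^ (β / 2) * (1 + ‖v‖ ^ 2) ^ (-β' / 2)) :
    ∫ v, ((w v)⁻¹) ^ 2 * (if √(m v) < α * (w v)⁻¹ then (1:ℝ) else 0) * m v * |⟪v, n⟫| ∂μ
      ≤ α ^ (2 + 2 * β) * ∫ v, (1 + ‖v‖ ^ 2) ^ (-(2 * β' - 1) / 2) ∂μ := by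
  have hβ' : 0 ≤ β' := by linarith [(Module.finrank ℝ E).cast_nonneg (α := ℝ)]
  rw [← integral_const_mul]
  refine integral_mono_of_nonneg (.of_forall fun v => ?_)
    ((integrable_rpow_neg_one_add_norm_sq (μ := μ) hdim).const_mul _)
    (.of_forall fun v => small_set_integrand_le (hm v) (hm1 v) hβ hβ' hα hn (hw v))
  have hmv := (hm v).le
  dsimp only [Pi.zero_apply]
  split_ifs <;> positivity

end InnerProductSpace

/-- Small-set estimate: if `w⁻¹ ≤ μ_c^{β/2} ⟨v⟩^{-β'}` with `β > 0`, `β' > 2`,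
then `∫ w⁻² 𝟙_{√μ_c < α w⁻¹} μ_c |v·n| dv ≤ C α^{2+2β}` uniformly for
`ε|c| ≤ 1`. -/
theorem small_velocity_set_estimate (β β' : ℝ) (hβ : 0 < β) (hβ' : 2 < β') :
    ∃ C > (0:ℝ), ∀ (ε : ℝ) (c : EuclideanSpace ℝ (Fin 3))
      (w : EuclideanSpace ℝ (Fin 3) → ℝ) (α : ℝ)
      (n : EuclideanSpace ℝ (Fin 3)),
      0 < ε → ε ≤ 1 → ε * ‖c‖ ≤ 1 → 0 < α → ‖n‖ = 1 →
      (∀ v, (w v)⁻¹ ≤ gaussC ε c v ^ (β/2) * (1 + ‖v‖^2) ^ (-β'/2)) →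
      (∫ v : EuclideanSpace ℝ (Fin 3),
          ((w v)⁻¹)^2
            * (if Real.sqrt (gaussC ε c v) < α * (w v)⁻¹ then (1:ℝ) else 0)
            * gaussC ε c v * |⟪v, n⟫|)
        ≤ C * α ^ (2 + 2*β) := by
  set I := ∫ v : EuclideanSpace ℝ (Fin 3), (1 + ‖v‖ ^ 2) ^ (-(2 * β' - 1) / 2)
  have hI : 0 ≤ I := integral_nonneg fun v => by positivity
  refine ⟨1 + I, by positivity, fun ε c w α n _ _ _ hα hn hw => ?_⟩
  have hdim : (Module.finrank ℝ (EuclideanSpace ℝ (Fin 3)) : ℝ) < 2 * β' - 1 := by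
    rw [finrank_euclideanSpace_fin]; push_cast; linarith
  calc _ ≤ α ^ (2 + 2 * β) * I := integral_small_set_le volume hdim hβ.le hα.le hn
          (fun v => gauss_pos _) (fun v => gauss_le_one _) hw
    _ ≤ (1 + I) * α ^ (2 + 2 * β) := by
          rw [mul_comm]; gcongr; linarith
end
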